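/- The N-truncated refined Antimirov automaton accepts the trace closure when the language has uniform rank at most N: if E is a regular expression over Σ such that ⟦E⟧ has uniform rank at most N, then for every word u, u ∈ [⟦E⟧] if and only if either (u = ε and E↓) or (u ≠ ε and there exist E₀, E₁ with E →^{I*}_N (u; [E₀, E₁]), E₀↓ and E₁↓). -/

import Mathlib

open RegularExpression
open scoped Classical

universe u

variable {α : Type u}

/-- Two words are independent if every letter of the first is independent
of every letter of the second. -/
def WIndep (I : α → α → Prop) (u v : List α) : Prop :=
  ∀ a ∈ u, ∀ b ∈ v, I a b

/-- Trace equivalence: the least equivalence relation on words containing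
all pairs (x ++ [a,b] ++ y, x ++ [b,a] ++ y) with a I b. -/
inductive TrEq (I : α → α → Prop) : List α → List α → Prop
  | swap (x y : List α) {a b : α} : I a b → TrEq I (x ++ [a, b] ++ y) (x ++ [b, a] ++ y)
  | refl (u : List α) : TrEq I u u
  | symm {u v : List α} : TrEq I u v → TrEq I v u
  | trans {u v w : List α} : TrEq I u v → TrEq I v w → TrEq I u w

/-- Trace closure of a language. -/
def TrClosure (I : α → α → Prop) (L : Set (List α)) : Set (List α) :=
  {w | ∃ z ∈ L, TrEq I w z}

/-- u ⊲ z ⊳ v with exactly n blocks of u: there are nonempty words u₁,…,uₙ and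
words v₀,…,vₙ (with v₁,…,v_{n-1} nonempty) such that u = u₁⋯uₙ, v = v₀⋯vₙ,
z = v₀u₁v₁⋯uₙvₙ and vⱼ I uᵢ whenever j < i. -/
def ScatN (I : α → α → Prop) (n : ℕ) (u z v : List α) : Prop :=
  ∃ us vs : ℕ → List α,
    (∀ i, 1 ≤ i → i ≤ n → us i ≠ []) ∧
    (∀ j, 1 ≤ j → j ≤ n - 1 → vs j ≠ []) ∧
    u = ((List.range n).map (fun i => us (i + 1))).flatten ∧
    v = ((List.range (n + 1)).map vs).flatten ∧
    z = vs 0 ++ ((List.range n).map (fun i => us (i + 1) ++ vs (i + 1))).flatten ∧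
    (∀ i j, 1 ≤ i → i ≤ n → j < i → WIndep I (vs j) (us i))

/-- u ⊲ z ⊳ v -/
def Scat (I : α → α → Prop) (u z v : List α) : Prop :=
  ∃ n, ScatN I n u z v

/-- u ∼⊲ z ⊳ v -/
def EqScat (I : α → α → Prop) (u z v : List α) : Prop :=
  ∃ u', TrEq I u u' ∧ Scat I u' z v

/-- u ∼⊲ z ⊳∼ v -/
def EqScatEq (I : α → α → Prop) (u z v : List α) : Prop :=
  ∃ u' v', TrEq I u u' ∧ Scat I u' z v' ∧ TrEq I v' v

/-- u ∼⊲_N z ⊳∼ v : as EqScatEq, with the number of blocks bounded by N -/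
def EqScatEqLe (I : α → α → Prop) (N : ℕ) (u z v : List α) : Prop :=
  ∃ u' v', TrEq I u u' ∧ (∃ n ≤ N, ScatN I n u' z v') ∧ TrEq I v' v

/-- Reordering concatenation of words. -/
def rconc (I : α → α → Prop) : List α → List α → Set (List α)
  | [], v => {v}
  | a :: u, [] => {a :: u}
  | a :: u, b :: v =>
      (List.cons a) '' rconc I u (b :: v) ∪
      {z | WIndep I (a :: u) [b] ∧ ∃ w ∈ rconc I (a :: u) v, z = b :: w}
termination_by u v => u.length + v.length

/-- Reordering concatenation lifted to languages. -/
def rconcL (I : α → α → Prop) (L L' : Set (List α)) : Set (List α) :=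
  {z | ∃ u ∈ L, ∃ v ∈ L', z ∈ rconc I u v}

/-- The reorderable part of a language w.r.t. a word. -/
def RPart (I : α → α → Prop) (u : List α) (L : Set (List α)) : Set (List α) :=
  {v ∈ L | WIndep I v u}

/-- The reordering derivative of a language along a word. -/
def RDeriv (I : α → α → Prop) (u : List α) (L : Set (List α)) : Set (List α) :=
  {v | ∃ z ∈ L, EqScat I u z v}

/-- Syntactic reorderable part of a regexp w.r.t. a letter. -/
noncomputable def Rexp (I : α → α → Prop) (a : α) : RegularExpression α → RegularExpression α
  | zero => zero
  | epsilon => epsilon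
  | char b => if I a b then char b else zero
  | plus E F => plus (Rexp I a E) (Rexp I a F)
  | comp E F => comp (Rexp I a E) (Rexp I a F)
  | RegularExpression.star E => star (Rexp I a E)

/-- Brzozowski reordering derivative of a regexp along a letter. -/
noncomputable def Dexp (I : α → α → Prop) (a : α) : RegularExpression α → RegularExpression α
  | zero => zero
  | epsilon => zero
  | char b => if a = b then epsilon else zero
  | plus E F => plus (Dexp I a E) (Dexp I a F)
  | comp E F => plus (comp (Dexp I a E) F) (comp (Rexp I a E) (Dexp I a F))
  | RegularExpression.star E => comp (star (Rexp I a E)) (comp (Dexp I a E) (star E))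

/-- Syntactic reorderable part along a word. -/
noncomputable def RexpW (I : α → α → Prop) (u : List α) (E : RegularExpression α) :
    RegularExpression α :=
  u.foldl (fun E a => Rexp I a E) E

/-- Brzozowski reordering derivative along a word. -/
noncomputable def DexpW (I : α → α → Prop) (u : List α) (E : RegularExpression α) :
    RegularExpression α :=
  u.foldl (fun E a => Dexp I a E) E

/-- Antimirov reordering parts-of-derivatives along a letter. -/
inductive Antim (I : α → α → Prop) : RegularExpression α → α → RegularExpression α → Prop
  | chr (a : α) : Antim I (char a) a epsilon
  | plusL {E F : RegularExpression α} {a E'} : Antim I E a E' → Antim I (plus E F) a E'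
  | plusR {E F : RegularExpression α} {a F'} : Antim I F a F' → Antim I (plus E F) a F'
  | compL {E F : RegularExpression α} {a E'} : Antim I E a E' → Antim I (comp E F) a (comp E' F)
  | compR {E F : RegularExpression α} {a F'} :
      Antim I F a F' → Antim I (comp E F) a (comp (Rexp I a E) F')
  | st {E : RegularExpression α} {a E'} :
      Antim I E a E' → Antim I (star E) a (comp (star (Rexp I a E)) (comp E' (star E)))

/-- Antimirov reordering parts-of-derivatives along a word. -/
inductive AntimW (I : α → α → Prop) : RegularExpression α → List α → RegularExpression α → Prop
  | nil (E : RegularExpression α) : AntimW I E [] E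
  | snoc {E : RegularExpression α} {u E' a E''} :
      AntimW I E u E' → Antim I E' a E'' → AntimW I E (u ++ [a]) E''

/-- The dependence graph of a word: vertices are positions; distinct positions
are adjacent when their letters are not independent. -/
def depGraph (I : α → α → Prop) (w : List α) : SimpleGraph (Fin w.length) where
  Adj i j := i ≠ j ∧ ¬(I (w.get i) (w.get j) ∧ I (w.get j) (w.get i))
  symm := by
    constructor
    intro i j h
    exact ⟨h.1.symm, fun hc => h.2 ⟨hc.2, hc.1⟩⟩
  loopless := by
    constructor
    intro i h
    exact h.1 rfl

/-- A word is connected if its dependence graph is connected. -/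
def WordConnected (I : α → α → Prop) (w : List α) : Prop :=
  (depGraph I w).Preconnected

/-- Least fixed point star for the trace-closing semantics. -/
def starI (I : α → α → Prop) (L : Set (List α)) : Set (List α) :=
  sInf {X | {([] : List α)} ∪ rconcL I L X ⊆ X}

/-- Trace-closing semantics of regular expressions. -/
def langI (I : α → α → Prop) : RegularExpression α → Set (List α)
  | zero => ∅
  | epsilon => {[]}
  | char a => {[a]}
  | plus E F => langI I E ∪ langI I F
  | comp E F => rconcL I (langI I E) (langI I F)
  | RegularExpression.star E => starI I (langI I E)

/-- L has (scattering) rank at most N. -/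
def HasRankLe (I : α → α → Prop) (L : Set (List α)) (N : ℕ) : Prop :=
  ∀ u v, u ++ v ∈ TrClosure I L → ∃ z ∈ L, EqScatEqLe I N u z v

/-- L has uniform (scattering) rank at most N. -/
def HasUniformRankLe (I : α → α → Prop) (L : Set (List α)) (N : ℕ) : Prop :=
  ∀ w ∈ TrClosure I L, ∃ z ∈ L, ∀ u v, w = u ++ v → EqScatEqLe I N u z v

/-- Star-connected regular expressions. -/
inductive StarConnected (I : α → α → Prop) : RegularExpression α → Prop
  | zero : StarConnected I zero
  | epsilon : StarConnected I epsilon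
  | chr (a : α) : StarConnected I (char a)
  | plus {E F : RegularExpression α} :
      StarConnected I E → StarConnected I F → StarConnected I (plus E F)
  | comp {E F : RegularExpression α} :
      StarConnected I E → StarConnected I F → StarConnected I (comp E F)
  | st {E : RegularExpression α} :
      StarConnected I E → (∀ w ∈ E.matches', WordConnected I w) → StarConnected I (star E)

/-- Refined Antimirov reordering parts-of-derivatives along a letter. -/
inductive RAntim (I : α → α → Prop) :
    RegularExpression α → α → RegularExpression α → RegularExpression α → Prop
  | chr (a : α) : RAntim I (char a) a epsilon epsilon
  | plusL {E F : RegularExpression α} {a El Er} :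
      RAntim I E a El Er → RAntim I (plus E F) a El Er
  | plusR {E F : RegularExpression α} {a Fl Fr} :
      RAntim I F a Fl Fr → RAntim I (plus E F) a Fl Fr
  | compL {E F : RegularExpression α} {a El Er} :
      RAntim I E a El Er → RAntim I (comp E F) a El (comp Er F)
  | compR {E F : RegularExpression α} {a Fl Fr} :
      RAntim I F a Fl Fr → RAntim I (comp E F) a (comp (Rexp I a E) Fl) Fr
  | st {E : RegularExpression α} {a El Er} :
      RAntim I E a El Er →
      RAntim I (star E) a (comp (star (Rexp I a E)) El) (comp Er (star E))

/-- Refined Antimirov relation lifted to nonempty lists of regexps (unbounded). -/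
inductive RAntimL (I : α → α → Prop) :
    List (RegularExpression α) → α → List (RegularExpression α) → Prop
  | split {Γ Δ : List (RegularExpression α)} {E : RegularExpression α} {a El Er} :
      RAntim I E a El Er →
      RAntimL I (Γ ++ E :: Δ) a (Γ.map (Rexp I a) ++ El :: Er :: Δ)
  | dropL {Γ Δ : List (RegularExpression α)} {E : RegularExpression α} {a El Er} :
      RAntim I E a El Er → [] ∈ El.matches' → Γ ≠ [] →
      RAntimL I (Γ ++ E :: Δ) a (Γ.map (Rexp I a) ++ Er :: Δ)
  | dropR {Γ Δ : List (RegularExpression α)} {E : RegularExpression α} {a El Er} :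
      RAntim I E a El Er → [] ∈ Er.matches' → Δ ≠ [] →
      RAntimL I (Γ ++ E :: Δ) a (Γ.map (Rexp I a) ++ El :: Δ)
  | dropBoth {Γ Δ : List (RegularExpression α)} {E : RegularExpression α} {a El Er} :
      RAntim I E a El Er → [] ∈ El.matches' → [] ∈ Er.matches' → Γ ≠ [] → Δ ≠ [] →
      RAntimL I (Γ ++ E :: Δ) a (Γ.map (Rexp I a) ++ Δ)

/-- Refined Antimirov relation along a word (unbounded). -/
inductive RAntimW (I : α → α → Prop) :
    RegularExpression α → List α → List (RegularExpression α) → Prop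
  | nil (E : RegularExpression α) : RAntimW I E [] [E]
  | snoc {E : RegularExpression α} {u Γ a Γ'} :
      RAntimW I E u Γ → RAntimL I Γ a Γ' → RAntimW I E (u ++ [a]) Γ'

/-- N-bounded refined Antimirov relation lifted to nonempty lists of regexps. -/
inductive RAntimLN (I : α → α → Prop) (N : ℕ) :
    List (RegularExpression α) → α → List (RegularExpression α) → Prop
  | split {Γ Δ : List (RegularExpression α)} {E : RegularExpression α} {a El Er} :
      RAntim I E a El Er → Γ.length + Δ.length < N →
      RAntimLN I N (Γ ++ E :: Δ) a (Γ.map (Rexp I a) ++ El :: Er :: Δ)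
  | dropL {Γ Δ : List (RegularExpression α)} {E : RegularExpression α} {a El Er} :
      RAntim I E a El Er → [] ∈ El.matches' → Γ ≠ [] →
      RAntimLN I N (Γ ++ E :: Δ) a (Γ.map (Rexp I a) ++ Er :: Δ)
  | dropR {Γ Δ : List (RegularExpression α)} {E : RegularExpression α} {a El Er} :
      RAntim I E a El Er → [] ∈ Er.matches' → Δ ≠ [] →
      RAntimLN I N (Γ ++ E :: Δ) a (Γ.map (Rexp I a) ++ El :: Δ)
  | dropBoth {Γ Δ : List (RegularExpression α)} {E : RegularExpression α} {a El Er} :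
      RAntim I E a El Er → [] ∈ El.matches' → [] ∈ Er.matches' → Γ ≠ [] → Δ ≠ [] →
      RAntimLN I N (Γ ++ E :: Δ) a (Γ.map (Rexp I a) ++ Δ)

/-- N-bounded refined Antimirov relation along a word. -/
inductive RAntimWN (I : α → α → Prop) (N : ℕ) :
    RegularExpression α → List α → List (RegularExpression α) → Prop
  | nil (E : RegularExpression α) : RAntimWN I N E [] [E]
  | snoc {E : RegularExpression α} {u Γ a Γ'} :
      RAntimWN I N E u Γ → RAntimLN I N Γ a Γ' → RAntimWN I N E (u ++ [a]) Γ'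

/-!
A run of the automaton on a word `p` is tracked by an interleaving of a fixed word `z ∈ ⟦E⟧`:
its blocks spell a representative of `p` and its gaps, the part of `z` not yet read, are matched
by the current list of expressions. Reading `a` moves an occurrence of `a` whose prefix in its gap
commutes with `a` from that gap into the blocks, and this is exactly one step of `RAntimLN` on the
matching expressions; soundness follows by induction on the run.

For completeness, uniform rank gives one `z` with a scattering `p ∼⊲_N z ⊳∼ s` for every split
`u = p ++ s`. Deleting the last letter of `p ++ [a]` from its scattering yields a scattering for
`p`, and by irreflexivity a scattering with nonempty inner gaps is determined by `z` and the
letters of its blocks, so it is the previous one. Consecutive scatterings are therefore linked by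
single gap steps, which the automaton follows within its bound of `N + 1` gaps.
-/

theorem List.append_eq_append_cons_iff {e f x y : List α} {a : α} :
    e ++ f = x ++ a :: y ↔
      (∃ m, e = x ++ a :: m ∧ y = m ++ f) ∨ ∃ m, x = e ++ m ∧ f = m ++ a :: y := by
  rw [List.append_eq_append_iff]
  constructor
  · rintro (⟨m, rfl, rfl⟩ | ⟨_ | ⟨b, m⟩, rfl, hm⟩)
    · exact .inr ⟨m, rfl, rfl⟩
    · exact .inr ⟨[], by simp, by simpa using hm.symm⟩
    · obtain ⟨rfl, rfl⟩ := List.cons_eq_cons.mp hm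
      exact .inl ⟨m, rfl, rfl⟩
  · rintro (⟨m, rfl, rfl⟩ | ⟨m, rfl, rfl⟩)
    · exact .inr ⟨a :: m, rfl, rfl⟩
    · exact .inl ⟨m, rfl, rfl⟩

theorem List.exists_of_flatten_eq_append_cons {L : List (List α)} {x y : List α} {a : α}
    (h : L.flatten = x ++ a :: y) :
    ∃ L₁ x₂ y₂ L₂, L = L₁ ++ (x₂ ++ a :: y₂) :: L₂ ∧
      x = L₁.flatten ++ x₂ ∧ y = y₂ ++ L₂.flatten := by
  rcases List.flatten_eq_append_iff.mp h with
    ⟨L₁, L₂, rfl, rfl, hL₂⟩ | ⟨L₁, x₂, c, y₂, L₂, rfl, rfl, hc⟩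
  · obtain ⟨N, y₂, L₂', rfl, hN, rfl⟩ := List.flatten_eq_cons_iff.mp hL₂.symm
    exact ⟨L₁ ++ N, [], y₂, L₂', by simp, by simp [List.flatten_eq_nil_iff.mpr hN], rfl⟩
  · obtain ⟨rfl, rfl⟩ : a = c ∧ y = y₂ ++ L₂.flatten := by simpa using hc
    exact ⟨L₁, x₂, y₂, L₂, rfl, rfl, by simp⟩

theorem List.eq_of_append_eq_append {g g' s s' : List α} (h : g ++ s = g' ++ s')
    (hs : ∀ c ∈ s.head?, c ∉ g') (hs' : ∀ c ∈ s'.head?, c ∉ g) : g = g' := by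
  rcases List.append_eq_append_iff.mp h with ⟨_ | ⟨c, m⟩, rfl, rfl⟩ | ⟨_ | ⟨c, m⟩, rfl, rfl⟩
  · simp
  · exact absurd (by simp) (hs c (by simp))
  · simp
  · exact absurd (by simp) (hs' c (by simp))

theorem List.Forall₂.exists_of_append_left {β : Type*} {R : α → β → Prop} {l₁ l₂ : List α}
    {L : List β} (h : List.Forall₂ R (l₁ ++ l₂) L) :
    ∃ L₁ L₂, L = L₁ ++ L₂ ∧ List.Forall₂ R l₁ L₁ ∧ List.Forall₂ R l₂ L₂ := by
  induction l₁ generalizing L with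
  | nil => exact ⟨[], L, rfl, .nil, h⟩
  | cons x l₁ ih =>
    obtain ⟨X, L', hx, h', rfl⟩ := List.forall₂_cons_left_iff.mp h
    obtain ⟨L₁, L₂, rfl, h₁, h₂⟩ := ih h'
    exact ⟨X :: L₁, L₂, rfl, .cons hx h₁, h₂⟩

theorem List.Forall₂.exists_of_append_right {β : Type*} {R : α → β → Prop} {l : List α}
    {L₁ L₂ : List β} (h : List.Forall₂ R l (L₁ ++ L₂)) :
    ∃ l₁ l₂, l = l₁ ++ l₂ ∧ List.Forall₂ R l₁ L₁ ∧ List.Forall₂ R l₂ L₂ :=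
  ⟨_, _, (List.take_append_drop L₁.length l).symm, List.forall₂_take_append l L₁ L₂ h,
    List.forall₂_drop_append l L₁ L₂ h⟩

section

variable {I : α → α → Prop}

@[simp] theorem wIndep_nil_right (u : List α) : WIndep I u [] := by simp [WIndep]

@[simp] theorem wIndep_cons_right {u v : List α} {b : α} :
    WIndep I u (b :: v) ↔ (∀ a ∈ u, I a b) ∧ WIndep I u v := by
  simp only [WIndep, List.mem_cons, forall_eq_or_imp]
  exact forall₂_and

@[simp] theorem wIndep_append_left {u u' v : List α} :
    WIndep I (u ++ u') v ↔ WIndep I u v ∧ WIndep I u' v := by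
  simp only [WIndep, List.mem_append]
  grind

@[simp] theorem wIndep_append_right {u v v' : List α} :
    WIndep I u (v ++ v') ↔ WIndep I u v ∧ WIndep I u v' := by
  simp only [WIndep, List.mem_append]
  grind

@[simp] theorem wIndep_flatten_right {u : List α} {vs : List (List α)} :
    WIndep I u vs.flatten ↔ ∀ v ∈ vs, WIndep I u v := by
  simp only [WIndep, List.mem_flatten]
  grind

theorem WIndep.mono_right {u v v' : List α} (h : WIndep I u v) (hv : ∀ b ∈ v', b ∈ v) :
    WIndep I u v' := fun a ha b hb => h a ha b (hv b hb)

theorem WIndep.symm [Std.Symm I] {u v : List α} (h : WIndep I u v) : WIndep I v u :=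
  fun b hb a ha => _root_.symm (h a ha b hb)

theorem WIndep.head?_append_not_mem [Std.Irrefl I] {g F u z : List α} (hg : WIndep I g F)
    (hu : u ≠ []) (huF : ∀ c ∈ u, c ∈ F) : ∀ c ∈ (u ++ z).head?, c ∉ g := by
  obtain ⟨d, t, rfl⟩ := List.exists_cons_of_ne_nil hu
  simp only [List.cons_append, List.head?_cons, Option.mem_def, Option.some.injEq]
  rintro _ rfl hd
  exact irrefl d (hg d hd d (huF d List.mem_cons_self))

namespace TrEq

theorem perm {u v : List α} (h : TrEq I u v) : u.Perm v := by
  induction h with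
  | swap x y => simpa using ((List.Perm.swap _ _ y).append_left x)
  | refl u => exact .refl u
  | symm _ ih => exact ih.symm
  | trans _ _ ih₁ ih₂ => exact ih₁.trans ih₂

theorem append_left (w : List α) {u v : List α} (h : TrEq I u v) :
    TrEq I (w ++ u) (w ++ v) := by
  induction h with
  | swap x y hab => simpa using TrEq.swap (w ++ x) y hab
  | refl u => exact .refl _
  | symm _ ih => exact ih.symm
  | trans _ _ ih₁ ih₂ => exact ih₁.trans ih₂

theorem append_right {u v : List α} (h : TrEq I u v) (w : List α) :
    TrEq I (u ++ w) (v ++ w) := by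
  induction h with
  | swap x y hab => simpa using TrEq.swap x (y ++ w) hab
  | refl u => exact .refl _
  | symm _ ih => exact ih.symm
  | trans _ _ ih₁ ih₂ => exact ih₁.trans ih₂

theorem eq_nil {u : List α} (h : TrEq I u []) : u = [] := h.perm.eq_nil

end TrEq

theorem trEq_append_singleton [Std.Symm I] {a : α} {w : List α} (h : WIndep I [a] w) :
    TrEq I (w ++ [a]) (a :: w) := by
  induction w with
  | nil => exact .refl _
  | cons b w ih =>
    simp only [wIndep_cons_right, List.mem_singleton, forall_eq] at h
    refine .trans (TrEq.append_left [b] (ih h.2)) ?_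
    simpa using TrEq.swap (I := I) [] w (symm h.1)

/-- Equivalent to `TrEq I v (w ++ [a])` (`IndepInsert.trEq`, `TrEq.indepInsert`), but exhibits
the occurrence of `a` that plays the role of the last letter. -/
def IndepInsert (I : α → α → Prop) (w : List α) (a : α) (v : List α) : Prop :=
  ∃ x y, v = x ++ a :: y ∧ WIndep I [a] y ∧ TrEq I (x ++ y) w

namespace IndepInsert

theorem swap [Std.Symm I] {w : List α} {a b c : α} {X Y : List α} (hbc : I b c)
    (h : IndepInsert I w a (X ++ [b, c] ++ Y)) : IndepInsert I w a (X ++ [c, b] ++ Y) := by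
  obtain ⟨x, y, hv, hy, hw⟩ := h
  have hv' : X ++ b :: c :: Y = x ++ a :: y := by simpa using hv
  rcases List.append_eq_append_iff.mp hv' with ⟨m, rfl, hm⟩ | ⟨m, rfl, hm⟩
  · rcases m with _ | ⟨b', _ | ⟨c', m⟩⟩
    · obtain ⟨rfl, rfl⟩ : b = a ∧ c :: Y = y := by simpa using hm
      exact ⟨X ++ [c], Y, by simp, by simp_all, by simpa using hw⟩
    · obtain ⟨hb, hc, hY⟩ : b = b' ∧ c = a ∧ Y = y := by simpa using hm
      subst b' a y
      exact ⟨X, b :: Y, by simp, by simpa [symm hbc] using hy, by simpa using hw⟩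
    · obtain ⟨rfl, rfl, rfl⟩ : b = b' ∧ c = c' ∧ Y = m ++ a :: y := by simpa using hm
      refine ⟨X ++ [c, b] ++ m, y, by simp, hy, .trans ?_ hw⟩
      simpa using TrEq.swap (I := I) X (m ++ y) (symm hbc)
  · rcases m with _ | ⟨a', m⟩
    · obtain ⟨rfl, rfl⟩ : a = b ∧ y = c :: Y := by simpa using hm
      exact ⟨x ++ [c], Y, by simp, by simp_all, by simpa using hw⟩
    · obtain ⟨rfl, rfl⟩ : a = a' ∧ y = m ++ b :: c :: Y := by simpa using hm
      refine ⟨x, m ++ c :: b :: Y, by simp, by simp_all, .trans ?_ hw⟩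
      simpa using TrEq.swap (I := I) (x ++ m) Y (symm hbc)

theorem of_trEq [Std.Symm I] {w v v' : List α} {a : α} (h : TrEq I v v') :
    IndepInsert I w a v ↔ IndepInsert I w a v' := by
  induction h with
  | swap X Y hbc => exact ⟨swap hbc, by simpa using swap (symm hbc) (X := X) (Y := Y)⟩
  | refl u => rfl
  | symm _ ih => exact ih.symm
  | trans _ _ ih₁ ih₂ => exact ih₁.trans ih₂

theorem trEq [Std.Symm I] {w v : List α} {a : α} (h : IndepInsert I w a v) :
    TrEq I v (w ++ [a]) := by
  obtain ⟨x, y, rfl, hy, hw⟩ := h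
  refine .trans ?_ (hw.append_right [a])
  simpa using TrEq.append_left x (trEq_append_singleton hy).symm

theorem append_left (p : List α) {w v : List α} {a : α} (h : IndepInsert I w a v) :
    IndepInsert I (p ++ w) a (p ++ v) := by
  obtain ⟨x, y, rfl, hy, hw⟩ := h
  exact ⟨p ++ x, y, by simp, hy, by simpa using hw.append_left p⟩

theorem mem {w v : List α} {a c : α} (h : IndepInsert I w a v) (hc : c ∈ v) : c = a ∨ c ∈ w := by
  obtain ⟨x, y, rfl, -, hw⟩ := h
  rw [← hw.perm.mem_iff]
  simp only [List.mem_append, List.mem_cons] at hc ⊢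
  tauto

end IndepInsert

theorem indepInsert_append_cons (x : List α) {y : List α} {a : α} (hy : WIndep I [a] y) :
    IndepInsert I (x ++ y) a (x ++ a :: y) :=
  ⟨x, y, rfl, hy, .refl _⟩

theorem TrEq.indepInsert [Std.Symm I] {w v : List α} {a : α} (h : TrEq I v (w ++ [a])) :
    IndepInsert I w a v :=
  (IndepInsert.of_trEq h).2 ⟨w, [], by simp, by simp, by simpa using .refl w⟩

theorem mem_matches'_Rexp {a : α} (E : RegularExpression α) {w : List α} :
    w ∈ (Rexp I a E).matches' ↔ w ∈ E.matches' ∧ WIndep I [a] w := by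
  induction E generalizing w with
  | zero => simp [Rexp]
  | epsilon =>
    simp only [Rexp, one_def, matches'_epsilon, Language.mem_one]
    grind [wIndep_nil_right]
  | char b =>
    unfold Rexp
    split_ifs with hab
    · exact ⟨fun h => ⟨h, by obtain rfl : w = [b] := h; simpa using hab⟩, And.left⟩
    · simp only [zero_def, matches'_zero, Language.notMem_zero, false_iff, not_and]
      rintro (rfl : w = [b])
      simpa using hab
  | plus E F ihE ihF => simp [Rexp, Language.mem_add, ihE, ihF]; tauto
  | comp E F ihE ihF =>
    simp only [Rexp, comp_def, matches'_mul, Language.mem_mul, ihE, ihF]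
    grind [wIndep_append_right]
  | star E ihE =>
    simp only [Rexp, matches'_star, Language.mem_kstar, ihE]
    grind [wIndep_flatten_right]

theorem RAntim.append_cons_mem {E El Er : RegularExpression α} {a : α}
    (h : RAntim I E a El Er) {wl wr : List α} (hl : wl ∈ El.matches') (hr : wr ∈ Er.matches') :
    wl ++ a :: wr ∈ E.matches' ∧ WIndep I [a] wl := by
  induction h generalizing wl wr with
  | chr b =>
    obtain ⟨rfl, rfl⟩ : wl = [] ∧ wr = [] := ⟨hl, hr⟩
    exact ⟨rfl, wIndep_nil_right _⟩
  | plusL _ ih => exact (ih hl hr).imp_left Or.inl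
  | plusR _ ih => exact (ih hl hr).imp_left Or.inr
  | compL _ ih =>
    obtain ⟨er, her, f, hf, rfl⟩ := Language.mem_mul.mp hr
    obtain ⟨hm, hi⟩ := ih hl her
    exact ⟨Language.mem_mul.mpr ⟨_, hm, f, hf, by simp⟩, hi⟩
  | compR _ ih =>
    obtain ⟨e, he, fl, hfl, rfl⟩ := Language.mem_mul.mp hl
    obtain ⟨he, hei⟩ := (mem_matches'_Rexp _).mp he
    obtain ⟨hm, hi⟩ := ih hfl hr
    exact ⟨Language.mem_mul.mpr ⟨e, he, _, hm, by simp⟩, wIndep_append_right.mpr ⟨hei, hi⟩⟩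
  | @st E b El Er _ ih =>
    obtain ⟨s, hs, el, hel, rfl⟩ := Language.mem_mul.mp hl
    obtain ⟨er, her, t, ht, rfl⟩ := Language.mem_mul.mp hr
    obtain ⟨L₁, rfl, hL₁⟩ := Language.mem_kstar.mp hs
    obtain ⟨L₂, rfl, hL₂⟩ := Language.mem_kstar.mp ht
    obtain ⟨hm, hi⟩ := ih hel her
    refine ⟨Language.mem_kstar.mpr ⟨L₁ ++ (el ++ b :: er) :: L₂, by simp, ?_⟩, ?_⟩
    · simp only [List.mem_append, List.mem_cons]
      rintro y (hy | rfl | hy)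
      exacts [((mem_matches'_Rexp _).mp (hL₁ y hy)).1, hm, hL₂ y hy]
    · simpa [hi] using fun y hy => ((mem_matches'_Rexp _).mp (hL₁ y hy)).2

theorem exists_rAntim_of_mem {a : α} (E : RegularExpression α) {x y : List α}
    (h : x ++ a :: y ∈ E.matches') (hx : WIndep I [a] x) :
    ∃ El Er, RAntim I E a El Er ∧ x ∈ El.matches' ∧ y ∈ Er.matches' := by
  induction E generalizing x y with
  | zero => simp at h
  | epsilon => simp [Language.mem_one] at h
  | char b =>
    have h : x ++ a :: y = [b] := h
    obtain ⟨rfl, rfl, rfl⟩ : x = [] ∧ a = b ∧ y = [] := by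
      simpa [List.append_eq_singleton_iff] using h
    exact ⟨epsilon, epsilon, .chr a, rfl, rfl⟩
  | plus E F ihE ihF =>
    rcases (Language.mem_add _ _ _).mp h with h | h
    · obtain ⟨El, Er, hA, hl, hr⟩ := ihE h hx
      exact ⟨El, Er, .plusL hA, hl, hr⟩
    · obtain ⟨Fl, Fr, hA, hl, hr⟩ := ihF h hx
      exact ⟨Fl, Fr, .plusR hA, hl, hr⟩
  | comp E F ihE ihF =>
    obtain ⟨e, he, f, hf, hef⟩ := Language.mem_mul.mp h
    rcases List.append_eq_append_cons_iff.mp hef with ⟨m, rfl, rfl⟩ | ⟨m, rfl, rfl⟩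
    · obtain ⟨El, Er, hA, hl, hr⟩ := ihE he hx
      exact ⟨El, Er * F, .compL hA, hl, Language.mem_mul.mpr ⟨m, hr, f, hf, rfl⟩⟩
    · rw [wIndep_append_right] at hx
      obtain ⟨Fl, Fr, hA, hl, hr⟩ := ihF hf hx.2
      refine ⟨Rexp I a E * Fl, Fr, .compR hA, ?_, hr⟩
      exact Language.mem_mul.mpr ⟨e, (mem_matches'_Rexp _).mpr ⟨he, hx.1⟩, m, hl, rfl⟩
  | star E ihE =>
    obtain ⟨L, hL, hmem⟩ := Language.mem_kstar.mp h
    obtain ⟨L₁, x₂, y₂, L₂, rfl, rfl, rfl⟩ := List.exists_of_flatten_eq_append_cons hL.symm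
    simp only [wIndep_append_right, wIndep_flatten_right] at hx
    obtain ⟨El, Er, hA, hl, hr⟩ := ihE (hmem (x₂ ++ a :: y₂) (by simp)) hx.2
    refine ⟨(Rexp I a E).star * El, Er * E.star, .st hA, Language.mem_mul.mpr
      ⟨L₁.flatten, ?_, x₂, hl, rfl⟩, Language.mem_mul.mpr ⟨y₂, hr, L₂.flatten, ?_, rfl⟩⟩
    · refine Language.mem_kstar.mpr ⟨L₁, rfl, fun w hw => ?_⟩
      exact (mem_matches'_Rexp _).mpr ⟨hmem w (by simp [hw]), hx.1 w hw⟩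
    · exact Language.mem_kstar.mpr ⟨L₂, rfl, fun w hw => hmem w (by simp [hw])⟩

/-- `Interleaving I [v₀, …, vₙ] [u₁, …, uₙ] z`: `z = v₀u₁v₁⋯uₙvₙ` with nonempty blocks `uᵢ` and
`vⱼ I uᵢ` for `j < i`. With `InnerNonempty [v₀, …, vₙ]` this is the data of `u ⊲ z ⊳ v`. -/
inductive Interleaving (I : α → α → Prop) : List (List α) → List (List α) → List α → Prop
  | single (g : List α) : Interleaving I [g] [] g
  | cons (g u : List α) {gs us : List (List α)} {z : List α} :
      u ≠ [] → WIndep I g (u ++ us.flatten) → Interleaving I gs us z →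
      Interleaving I (g :: gs) (u :: us) (g ++ u ++ z)

def InnerNonempty (gs : List (List α)) : Prop :=
  ∀ A g B, gs = A ++ g :: B → A ≠ [] → B ≠ [] → g ≠ []

namespace InnerNonempty

theorem of_cons {g : List α} {gs : List (List α)} (h : InnerNonempty (g :: gs)) :
    InnerNonempty gs :=
  fun A k B hE hA hB => h (g :: A) k B (by simp [hE]) (by simp) hB

theorem ne_nil {g h : List α} {gs : List (List α)} (hi : InnerNonempty (g :: h :: gs))
    (hgs : gs ≠ []) : h ≠ [] :=
  hi [g] h gs rfl (by simp) hgs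

theorem cons_cons {g h : List α} {gs : List (List α)} (hh : gs ≠ [] → h ≠ [])
    (hi : InnerNonempty (h :: gs)) : InnerNonempty (g :: h :: gs) := by
  rintro (_ | ⟨g', _ | ⟨h', A⟩⟩) k B hE hA hB
  · exact absurd rfl hA
  · obtain ⟨-, rfl, rfl⟩ : g = g' ∧ h = k ∧ gs = B := by simpa using hE
    exact hh hB
  · obtain ⟨-, rfl, hE'⟩ : g = g' ∧ h = h' ∧ gs = A ++ k :: B := by simpa using hE
    exact hi (h :: A) k B (by simp [hE']) (by simp) hB

theorem singleton (g : List α) : InnerNonempty [g] :=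
  fun A k B hE hA hB => by
    rcases A with _ | ⟨a, A⟩
    · exact absurd rfl hA
    · simp at hE

end InnerNonempty

namespace Interleaving

variable {gs us : List (List α)} {z : List α}

theorem gaps_ne_nil (h : Interleaving I gs us z) : gs ≠ [] := by
  cases h <;> simp

theorem length_gaps (h : Interleaving I gs us z) : gs.length = us.length + 1 := by
  induction h with
  | single => rfl
  | cons _ _ _ _ _ ih => simp [ih]

theorem ne_nil_of_mem_blocks (h : Interleaving I gs us z) {u : List α} (hu : u ∈ us) :
    u ≠ [] := by
  induction h with
  | single => simp at hu
  | cons _ _ hne _ _ ih =>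
    rcases List.mem_cons.mp hu with rfl | hu
    exacts [hne, ih hu]

theorem blocks_eq_nil_iff (h : Interleaving I gs us z) : us = [] ↔ us.flatten = [] := by
  refine ⟨fun h => by simp [h], fun hflat => ?_⟩
  rw [List.flatten_eq_nil_iff] at hflat
  exact List.eq_nil_iff_forall_not_mem.mpr fun u hu => h.ne_nil_of_mem_blocks hu (hflat u hu)

theorem eq_single (h : Interleaving I gs [] z) : gs = [z] := by
  cases h; rfl

theorem gaps_eq_nil_nil
    (h : Interleaving I gs us z) (hi : InnerNonempty gs) (hus : us ≠ [])
    (hgs : gs.flatten = []) : gs = [[], []] := by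
  rw [List.flatten_eq_nil_iff] at hgs
  obtain ⟨g₀, g₁, rest, rfl⟩ : ∃ g₀ g₁ rest, gs = g₀ :: g₁ :: rest := by
    match gs, h.length_gaps, hus with
    | g₀ :: g₁ :: rest, _, _ => exact ⟨g₀, g₁, rest, rfl⟩
    | [_], hlen, hus => simp_all
  obtain rfl : rest = [] := by
    by_contra hne
    exact hi.ne_nil hne (hgs g₁ (by simp))
  simp_all

theorem eq_singleton_of_gaps_nil_nil (h : Interleaving I [[], []] us z) : us = [z] := by
  obtain _ | ⟨_, u, -, -, h₁⟩ := h
  cases h₁ with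
  | single => simp
  | cons _ _ _ _ h₂ => exact absurd rfl h₂.gaps_ne_nil

theorem head_ne_nil {g₀ g : List α} (h : Interleaving I (g :: gs) us z)
    (hi : InnerNonempty (g₀ :: g :: gs)) (hus : us ≠ []) : g ≠ [] :=
  hi.ne_nil fun hgs => hus (List.eq_nil_of_length_eq_zero (by simpa [hgs] using h.length_gaps))

theorem prepend {g p : List α} (h : Interleaving I (g :: gs) us z) (hp : WIndep I p us.flatten) :
    Interleaving I ((p ++ g) :: gs) us (p ++ z) := by
  cases h with
  | single => exact .single _
  | cons g u hu hg h => simpa using Interleaving.cons (p ++ g) u hu (by simp_all) h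

theorem of_prepend {g p : List α} (h : Interleaving I ((p ++ g) :: gs) us z) :
    ∃ z', z = p ++ z' ∧ Interleaving I (g :: gs) us z' ∧ WIndep I p us.flatten := by
  cases h with
  | single => exact ⟨g, rfl, .single g, by simp⟩
  | cons _ u hu hg h =>
    rw [wIndep_append_left] at hg
    exact ⟨g ++ u ++ _, by simp, .cons g u hu hg.2 h, by simpa using hg.1⟩

variable [Std.Irrefl I]

theorem not_mem_blocks_of_mem_head {g : List α} {c : α} (h : Interleaving I (g :: gs) us z)
    (hc : c ∈ g) : c ∉ us.flatten := by
  cases h with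
  | single => simp
  | cons _ u _ hg _ => exact fun hc' => irrefl c (hg c hc c (by simpa using hc'))

theorem head_not_mem_blocks {g : List α} {c : α} (h : Interleaving I (g :: gs) us (c :: z))
    (hg : us ≠ [] → g ≠ []) : c ∉ us.flatten := by
  intro hc
  obtain ⟨d, g', rfl⟩ := List.exists_cons_of_ne_nil (hg (by rintro rfl; simp at hc))
  have h' : Interleaving I (((d :: g') ++ []) :: gs) us (c :: z) := by simpa using h
  obtain ⟨z', hz, -⟩ := h'.of_prepend
  obtain rfl : c = d := by simpa using congrArg List.head? hz
  exact h.not_mem_blocks_of_mem_head List.mem_cons_self hc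

theorem eq_nil_of_perm_append {g z' m F : List α} (h : Interleaving I (g :: gs) us z)
    (hg : us ≠ [] → g ≠ []) (hz : z = m ++ z') (hp : us.flatten.Perm (m ++ F)) : m = [] := by
  rcases m with _ | ⟨c, m⟩
  · rfl
  · exact absurd (hp.mem_iff.mpr (by simp)) (head_not_mem_blocks (hz ▸ h) hg)

theorem eq_of_perm {gs' us' : List (List α)} (h : Interleaving I gs us z)
    (h' : Interleaving I gs' us' z) (hi : InnerNonempty gs) (hi' : InnerNonempty gs')
    (hp : us.flatten.Perm us'.flatten) : gs = gs' ∧ us = us' := by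
  induction h generalizing gs' us' with
  | single g =>
    obtain rfl : us' = [] := (h'.blocks_eq_nil_iff).mpr (by simpa using hp.symm)
    exact ⟨h'.eq_single.symm, rfl⟩
  | @cons g u gs us z hu hg h ih =>
    generalize hw : g ++ u ++ z = w at h'
    cases h' with
    | single => exact absurd (List.append_eq_nil_iff.mp hp.eq_nil).1 hu
    | @cons g' u' gs' us' z' hu' hg' h' =>
      obtain rfl : g = g' := List.eq_of_append_eq_append (by simpa using hw)
        (hg'.head?_append_not_mem hu fun c hc => hp.mem_iff.mp (List.mem_append_left _ hc))
        (hg.head?_append_not_mem hu' fun c hc => hp.mem_iff.mpr (List.mem_append_left _ hc))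
      have hw' : u ++ z = u' ++ z' := by simpa using hw
      obtain ⟨g₂, gs₂, rfl⟩ := List.exists_cons_of_ne_nil h.gaps_ne_nil
      obtain ⟨g₂', gs₂', rfl⟩ := List.exists_cons_of_ne_nil h'.gaps_ne_nil
      obtain rfl : u = u' := by
        rcases List.append_eq_append_iff.mp hw' with ⟨m, rfl, rfl⟩ | ⟨m, rfl, rfl⟩
        · simpa using eq_nil_of_perm_append h (h.head_ne_nil hi) rfl
            ((List.perm_append_left_iff u).mp (by simpa using hp))
        · simpa using (eq_nil_of_perm_append h' (h'.head_ne_nil hi') rfl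
            ((List.perm_append_left_iff u').mp (by simpa using hp.symm))).symm
      obtain rfl : z = z' := List.append_cancel_left hw'
      obtain ⟨hgs, rfl⟩ := ih h' hi.of_cons hi'.of_cons
        ((List.perm_append_left_iff u).mp (by simpa using hp))
      exact ⟨by rw [hgs], rfl⟩

end Interleaving

theorem interleaving_range (n : ℕ) (us vs : ℕ → List α)
    (hus : ∀ i, 1 ≤ i → i ≤ n → us i ≠ [])
    (hind : ∀ i j, 1 ≤ i → i ≤ n → j < i → WIndep I (vs j) (us i)) :
    Interleaving I ((List.range (n + 1)).map vs) ((List.range n).map (fun i => us (i + 1)))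
      (vs 0 ++ ((List.range n).map (fun i => us (i + 1) ++ vs (i + 1))).flatten) := by
  induction n generalizing us vs with
  | zero => simpa using .single (vs 0)
  | succ n ih =>
    have htail := ih (fun i => us (i + 1)) (fun i => vs (i + 1))
      (fun i h₁ h₂ => hus (i + 1) (by omega) (by omega))
      (fun i j h₁ h₂ hj => hind (i + 1) (j + 1) (by omega) (by omega) (by omega))
    have hhead : WIndep I (vs 0) (us 1 ++ ((List.range n).map (fun i => us (i + 2))).flatten) := by
      simp only [wIndep_append_right, wIndep_flatten_right, List.mem_map, List.mem_range]
      refine ⟨hind 1 0 le_rfl (by omega) one_pos, ?_⟩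
      rintro _ ⟨i, hi, rfl⟩
      exact hind (i + 2) 0 (by omega) (by omega) (by omega)
    have := Interleaving.cons (vs 0) (us 1) (hus 1 le_rfl (by omega)) hhead htail
    simp only [List.range_succ_eq_map] at this ⊢
    simpa [Function.comp_def, List.append_assoc] using this

theorem innerNonempty_range (n : ℕ) (vs : ℕ → List α)
    (hvs : ∀ j, 1 ≤ j → j ≤ n - 1 → vs j ≠ []) :
    InnerNonempty ((List.range (n + 1)).map vs) := by
  induction n generalizing vs with
  | zero => simpa using InnerNonempty.singleton (vs 0)
  | succ n ih =>
    have htail := ih (fun i => vs (i + 1)) (fun j h₁ h₂ => hvs (j + 1) (by omega) (by omega))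
    simp only [List.range_succ_eq_map, List.map_cons, List.map_map] at htail ⊢
    refine htail.cons_cons fun hn => hvs 1 le_rfl ?_
    rcases n with _ | n
    · simp at hn
    · omega

theorem ScatN.exists_interleaving {n : ℕ} {u z v : List α} (h : ScatN I n u z v) :
    ∃ gs us, Interleaving I gs us z ∧ InnerNonempty gs ∧ gs.length = n + 1 ∧
      us.flatten = u ∧ gs.flatten = v := by
  obtain ⟨us, vs, hus, hvs, rfl, rfl, rfl, hind⟩ := h
  exact ⟨_, _, interleaving_range n us vs hus hind, innerNonempty_range n vs hvs, by simp,
    rfl, rfl⟩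

/-- The four rules of `RAntimLN`, seen on the words matched by the listed expressions: reading `a`
moves an occurrence of `a` from a gap into the blocks of an interleaving. -/
inductive GapStep (I : α → α → Prop) (a : α) : List (List α) → List (List α) → Prop
  | split (ws₁ ws₂ : List (List α)) (wl wr : List α) :
      WIndep I [a] ws₁.flatten → WIndep I [a] wl →
      GapStep I a (ws₁ ++ (wl ++ a :: wr) :: ws₂) (ws₁ ++ wl :: wr :: ws₂)
  | dropL (ws₁ ws₂ : List (List α)) (wr : List α) :
      WIndep I [a] ws₁.flatten → ws₁ ≠ [] →
      GapStep I a (ws₁ ++ (a :: wr) :: ws₂) (ws₁ ++ wr :: ws₂)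
  | dropR (ws₁ ws₂ : List (List α)) (wl : List α) :
      WIndep I [a] ws₁.flatten → WIndep I [a] wl → ws₂ ≠ [] →
      GapStep I a (ws₁ ++ (wl ++ [a]) :: ws₂) (ws₁ ++ wl :: ws₂)
  | dropBoth (ws₁ ws₂ : List (List α)) :
      WIndep I [a] ws₁.flatten → ws₁ ≠ [] → ws₂ ≠ [] →
      GapStep I a (ws₁ ++ [a] :: ws₂) (ws₁ ++ ws₂)

theorem InnerNonempty.of_replace {ws₁ ws₂ mid : List (List α)} {x : List α}
    (h : InnerNonempty (ws₁ ++ mid ++ ws₂)) (h₁ : ws₁ ++ mid ≠ []) (h₂ : mid ++ ws₂ ≠ [])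
    (hx : x ≠ []) : InnerNonempty (ws₁ ++ x :: ws₂) := by
  intro A g B hE hA hB
  rcases List.append_eq_append_cons_iff.mp hE with ⟨m, rfl, rfl⟩ | ⟨_ | ⟨x', m⟩, rfl, hm⟩
  · exact h A g (m ++ mid ++ ws₂) (by simp) hA (by simp_all)
  · obtain ⟨rfl, rfl⟩ : x = g ∧ ws₂ = B := by simpa using hm
    exact hx
  · obtain ⟨rfl, rfl⟩ : x = x' ∧ ws₂ = m ++ g :: B := by simpa using hm
    exact h (ws₁ ++ mid ++ m) g B (by simp) (by simp_all) hB

theorem GapStep.innerNonempty {a : α} {gs gs' : List (List α)} (h : GapStep I a gs gs')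
    (hi : InnerNonempty gs') : InnerNonempty gs := by
  cases h with
  | split ws₁ ws₂ wl wr =>
    exact .of_replace (mid := [wl, wr]) (by simpa using hi) (by simp) (by simp) (by simp)
  | dropL ws₁ ws₂ wr =>
    exact .of_replace (mid := [wr]) (by simpa using hi) (by simp) (by simp) (by simp)
  | dropR ws₁ ws₂ wl =>
    exact .of_replace (mid := [wl]) (by simpa using hi) (by simp) (by simp) (by simp)
  | dropBoth ws₁ ws₂ _ h₁ h₂ =>
    exact .of_replace (mid := []) (by simpa using hi) (by simpa) (by simpa) (by simp)

theorem GapStep.cons {a : α} {gs gs' : List (List α)} (h : GapStep I a gs gs') {w : List α}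
    (hw : WIndep I [a] w) : GapStep I a (w :: gs) (w :: gs') := by
  cases h with
  | split ws₁ ws₂ wl wr hws hwl => simpa using split (w :: ws₁) ws₂ wl wr (by simp [hw, hws]) hwl
  | dropL ws₁ ws₂ wr hws _ => simpa using dropL (w :: ws₁) ws₂ wr (by simp [hw, hws]) (by simp)
  | dropR ws₁ ws₂ wl hws hwl hne =>
    simpa using dropR (w :: ws₁) ws₂ wl (by simp [hw, hws]) hwl hne
  | dropBoth ws₁ ws₂ hws _ hne =>
    simpa using dropBoth (w :: ws₁) ws₂ (by simp [hw, hws]) (by simp) hne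

namespace Interleaving

variable [Std.Symm I] {a : α} {ws us : List (List α)} {z : List α}

theorem split_head {wl wr : List α} (h : Interleaving I ((wl ++ a :: wr) :: ws) us z)
    (hwl : WIndep I [a] wl) :
    Interleaving I (wl :: wr :: ws) ([a] :: us) z ∧
      IndepInsert I us.flatten a ([a] :: us).flatten := by
  obtain ⟨z', rfl, h', hind⟩ := of_prepend (p := wl ++ [a]) (g := wr) (by simpa using h)
  rw [wIndep_append_left] at hind
  have hcons := Interleaving.cons wl [a] (List.cons_ne_nil a [])
    (wIndep_append_right.mpr ⟨hwl.symm, hind.1⟩) h'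
  exact ⟨by simpa using hcons, by simpa using indepInsert_append_cons [] hind.2⟩

theorem dropR_head {wl : List α} (h : Interleaving I ((wl ++ [a]) :: ws) us z) (hws : ws ≠ [])
    (hwl : WIndep I [a] wl) :
    ∃ us', Interleaving I (wl :: ws) us' z ∧ IndepInsert I us.flatten a us'.flatten := by
  obtain ⟨z', rfl, h', hind⟩ := of_prepend (p := wl ++ [a]) (g := []) (by simpa using h)
  rw [wIndep_append_left] at hind
  cases h' with
  | single => exact absurd rfl hws
  | cons _ u hu _ h₂ =>
    have hcons := Interleaving.cons wl (a :: u) (List.cons_ne_nil a u)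
      (wIndep_append_right.mpr ⟨hwl.symm, hind.1⟩ : WIndep I wl ([a] ++ _)) h₂
    exact ⟨_, by simpa using hcons, by simpa using indepInsert_append_cons [] hind.2⟩

theorem dropL_head {w wr : List α} (h : Interleaving I (w :: (a :: wr) :: ws) us z)
    (hw : WIndep I [a] w) :
    ∃ us', Interleaving I (w :: wr :: ws) us' z ∧ IndepInsert I us.flatten a us'.flatten := by
  cases h with
  | cons _ u hu hwu h₁ =>
    obtain ⟨z', rfl, h₂, hind⟩ := of_prepend (p := [a]) (g := wr) h₁
    rw [wIndep_append_right] at hwu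
    have hcons := Interleaving.cons w (u ++ [a]) (by simp)
      (by simpa using (⟨hwu.1, hw.symm, hwu.2⟩ : WIndep I w u ∧ WIndep I w [a] ∧ _)) h₂
    exact ⟨_, by simpa using hcons, by simpa using indepInsert_append_cons u hind⟩

theorem dropBoth_head {w : List α} (h : Interleaving I (w :: [a] :: ws) us z) (hws : ws ≠ [])
    (hw : WIndep I [a] w) :
    ∃ us', Interleaving I (w :: ws) us' z ∧ IndepInsert I us.flatten a us'.flatten := by
  cases h with
  | cons _ u hu hwu h₁ =>
    obtain ⟨z', rfl, h₂, hind⟩ := of_prepend (p := [a]) (g := []) (by simpa using h₁)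
    cases h₂ with
    | single => exact absurd rfl hws
    | cons _ u₂ _ _ h₃ =>
      simp only [List.flatten_cons, wIndep_append_right] at hwu
      have hcons := Interleaving.cons w (u ++ a :: u₂) (by simp)
        (by simpa using (⟨hwu.1, hw.symm, hwu.2⟩ : WIndep I w u ∧ WIndep I w [a] ∧ _)) h₃
      exact ⟨_, by simpa using hcons, by simpa using indepInsert_append_cons u hind⟩

theorem exists_of_append_gaps {rest rest' : List (List α)} (hrest : rest ≠ [])
    (hloc : ∀ {us z}, Interleaving I rest us z →
      ∃ us', Interleaving I rest' us' z ∧ IndepInsert I us.flatten a us'.flatten)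
    (ws : List (List α)) {us : List (List α)} {z : List α} (hws : WIndep I [a] ws.flatten)
    (h : Interleaving I (ws ++ rest) us z) :
    ∃ us', Interleaving I (ws ++ rest') us' z ∧ IndepInsert I us.flatten a us'.flatten := by
  induction ws generalizing us z with
  | nil => exact hloc h
  | cons w ws ih =>
    rw [List.flatten_cons, wIndep_append_right] at hws
    rw [List.cons_append] at h ⊢
    generalize hgs : ws ++ rest = gs at h
    cases h with
    | single => simp_all
    | cons _ u hu hwu h₁ =>
      subst hgs
      obtain ⟨us₁', h₁', hins⟩ := ih hws.2 h₁
      refine ⟨u :: us₁', .cons w u hu ?_ h₁', by simpa using hins.append_left u⟩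
      intro b hb c hc
      rcases List.mem_append.mp hc with hc | hc
      · exact hwu b hb c (by simp [hc])
      · rcases hins.mem hc with rfl | hc
        · exact symm (hws.1 c (by simp) b hb)
        · exact hwu b hb c (by simp [hc])

theorem exists_of_gapStep {gs gs' us : List (List α)} {z : List α} (hstep : GapStep I a gs gs')
    (h : Interleaving I gs us z) :
    ∃ us', Interleaving I gs' us' z ∧ IndepInsert I us.flatten a us'.flatten := by
  cases hstep with
  | split ws₁ ws₂ wl wr hws hwl =>
    exact exists_of_append_gaps (by simp) (fun h => ⟨_, h.split_head hwl⟩) ws₁ hws h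
  | dropR ws₁ ws₂ wl hws hwl hne =>
    exact exists_of_append_gaps (by simp) (fun h => h.dropR_head hne hwl) ws₁ hws h
  | dropL ws₁ ws₂ wr hws hne =>
    obtain ⟨ws₀, w, rfl⟩ := (List.eq_nil_or_concat' ws₁).resolve_left hne
    simp only [List.flatten_append, wIndep_append_right, List.flatten_singleton] at hws
    simpa using exists_of_append_gaps (by simp) (fun h => h.dropL_head hws.2) ws₀ hws.1
      (by simpa using h)
  | dropBoth ws₁ ws₂ hws hne₁ hne₂ =>
    obtain ⟨ws₀, w, rfl⟩ := (List.eq_nil_or_concat' ws₁).resolve_left hne₁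
    simp only [List.flatten_append, wIndep_append_right, List.flatten_singleton] at hws
    simpa using exists_of_append_gaps (by simp) (fun h => h.dropBoth_head hne₂ hws.2) ws₀ hws.1
      (by simpa using h)

theorem exists_gapStep_head {g x y : List α} {gs U : List (List α)} {z : List α}
    (h : Interleaving I (g :: gs) ((x ++ a :: y) :: U) z) (hy : WIndep I [a] (y ++ U.flatten)) :
    ∃ gs₀ us₀, Interleaving I gs₀ us₀ z ∧ us₀.flatten = x ++ y ++ U.flatten ∧
      GapStep I a gs₀ (g :: gs) := by
  obtain _ | ⟨_, _, -, hg, h₂⟩ := h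
  obtain ⟨g₂, gs₃, rfl⟩ := List.exists_cons_of_ne_nil h₂.gaps_ne_nil
  have hga : WIndep I [a] g := WIndep.symm fun b hb c hc => hg b hb c (by simp_all)
  simp only [List.append_assoc, List.cons_append, wIndep_append_right, wIndep_cons_right] at hg hy
  rcases eq_or_ne x [] with rfl | hx <;> rcases eq_or_ne y [] with rfl | hy'
  · refine ⟨_, U, by simpa using h₂.prepend (p := g ++ [a]) (by simp_all), by simp, ?_⟩
    simpa using GapStep.split [] gs₃ g g₂ (by simp) hga
  · have h₀ := Interleaving.cons (g ++ [a]) y hy' (by simp_all) h₂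
    refine ⟨_, y :: U, by simpa using h₀, by simp, ?_⟩
    simpa using GapStep.dropR [] (g₂ :: gs₃) g (by simp) hga (by simp)
  · have h₀ := Interleaving.cons g x hx (by simp_all) (h₂.prepend (p := [a]) (by simp_all))
    refine ⟨_, x :: U, by simpa using h₀, by simp, ?_⟩
    simpa using GapStep.dropL [g] gs₃ g₂ (by simpa using hga) (by simp)
  · have h₀ := Interleaving.cons g x hx (by simp_all)
      (Interleaving.cons [a] y hy' (by simp_all) h₂)
    refine ⟨_, x :: y :: U, by simpa using h₀, by simp, ?_⟩
    simpa using GapStep.dropBoth [g] (g₂ :: gs₃) (by simpa using hga) (by simp) (by simp)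

theorem exists_gapStep {gs us : List (List α)} {z x y : List α}
    (h : Interleaving I gs us z) (hus : us.flatten = x ++ a :: y) (hy : WIndep I [a] y) :
    ∃ gs₀ us₀, Interleaving I gs₀ us₀ z ∧ us₀.flatten = x ++ y ∧ GapStep I a gs₀ gs := by
  induction h generalizing x y with
  | single => simp at hus
  | @cons g u gs us z hu hg h₁ ih =>
    rw [List.flatten_cons] at hus
    rcases List.append_eq_append_cons_iff.mp hus with ⟨m, rfl, rfl⟩ | ⟨m, rfl, hm⟩
    · simpa using exists_gapStep_head (Interleaving.cons g _ hu hg h₁) hy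
    · obtain ⟨gs₀, us₀, h₀, hflat, hstep⟩ := ih hm hy
      have hga : WIndep I [a] g := WIndep.symm fun b hb c hc => hg b hb c (by simp_all)
      refine ⟨g :: gs₀, u :: us₀, .cons g u hu ?_ h₀, by simp [hflat], hstep.cons hga⟩
      refine hg.mono_right fun c hc => ?_
      simp_all only [List.mem_append]
      tauto

end Interleaving

abbrev GapsMatch (gs : List (List α)) (Γ : List (RegularExpression α)) : Prop :=
  List.Forall₂ (fun g G => g ∈ G.matches') gs Γ

theorem gapsMatch_map_Rexp_iff {a : α} {gs : List (List α)} {Γ : List (RegularExpression α)} :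
    GapsMatch gs (Γ.map (Rexp I a)) ↔ GapsMatch gs Γ ∧ WIndep I [a] gs.flatten := by
  simp only [GapsMatch, List.forall₂_map_right_iff, mem_matches'_Rexp, wIndep_flatten_right]
  simp only [and_comm (a := _ ∈ _), List.forall₂_and_left]
  exact and_comm

theorem GapsMatch.exists_split {a : α} {ws₁ ws₂ : List (List α)} {x : List α}
    {Γ : List (RegularExpression α)} (hm : GapsMatch (ws₁ ++ x :: ws₂) Γ)
    (hws : WIndep I [a] ws₁.flatten) :
    ∃ Γ₁ G Γ₂, Γ = Γ₁ ++ G :: Γ₂ ∧ GapsMatch ws₁ (Γ₁.map (Rexp I a)) ∧ x ∈ G.matches' ∧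
      GapsMatch ws₂ Γ₂ ∧ (ws₁ ≠ [] ↔ Γ₁ ≠ []) ∧ (ws₂ ≠ [] ↔ Γ₂ ≠ []) := by
  obtain ⟨Γ₁, Γ₂', rfl, h₁, h₂'⟩ := hm.exists_of_append_left
  obtain ⟨G, Γ₂, hx, h₂, rfl⟩ := List.forall₂_cons_left_iff.mp h₂'
  exact ⟨Γ₁, G, Γ₂, rfl, gapsMatch_map_Rexp_iff.mpr ⟨h₁, hws⟩, hx, h₂,
    by simp [← List.length_eq_zero_iff, h₁.length_eq],
    by simp [← List.length_eq_zero_iff, h₂.length_eq]⟩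

theorem RAntimLN.exists_of_gapStep {N : ℕ} {a : α} {Γ : List (RegularExpression α)}
    {gs gs' : List (List α)} (hm : GapsMatch gs Γ) (hstep : GapStep I a gs gs')
    (hN : gs'.length ≤ N + 1) :
    ∃ Γ', RAntimLN I N Γ a Γ' ∧ GapsMatch gs' Γ' := by
  cases hstep with
  | split ws₁ ws₂ wl wr hws hwl =>
    obtain ⟨Γ₁, G, Γ₂, rfl, h₁, hx, h₂, -, -⟩ := hm.exists_split hws
    obtain ⟨El, Er, hA, hl, hr⟩ := exists_rAntim_of_mem G hx hwl
    refine ⟨_, .split hA ?_, List.rel_append h₁ (.cons hl (.cons hr h₂))⟩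
    have := h₁.length_eq
    have := h₂.length_eq
    simp_all only [List.length_append, List.length_cons, List.length_map]
    omega
  | dropL ws₁ ws₂ wr hws hne =>
    obtain ⟨Γ₁, G, Γ₂, rfl, h₁, hx, h₂, hne₁, -⟩ := hm.exists_split hws
    obtain ⟨El, Er, hA, hl, hr⟩ := exists_rAntim_of_mem (x := []) G hx (by simp)
    exact ⟨_, .dropL hA hl (hne₁.mp hne), List.rel_append h₁ (.cons hr h₂)⟩
  | dropR ws₁ ws₂ wl hws hwl hne =>
    obtain ⟨Γ₁, G, Γ₂, rfl, h₁, hx, h₂, -, hne₂⟩ := hm.exists_split hws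
    obtain ⟨El, Er, hA, hl, hr⟩ := exists_rAntim_of_mem (y := []) G hx hwl
    exact ⟨_, .dropR hA hr (hne₂.mp hne), List.rel_append h₁ (.cons hl h₂)⟩
  | dropBoth ws₁ ws₂ hws hne₁ hne₂ =>
    obtain ⟨Γ₁, G, Γ₂, rfl, h₁, hx, h₂, hne₁', hne₂'⟩ := hm.exists_split hws
    obtain ⟨El, Er, hA, hl, hr⟩ := exists_rAntim_of_mem (x := []) (y := []) G hx (by simp)
    exact ⟨_, .dropBoth hA hl hr (hne₁'.mp hne₁) (hne₂'.mp hne₂), List.rel_append h₁ h₂⟩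

theorem GapsMatch.exists_of_append_map_Rexp {a : α} {gs : List (List α)}
    {Γ₁ Γ₂ : List (RegularExpression α)} (hm : GapsMatch gs (Γ₁.map (Rexp I a) ++ Γ₂)) :
    ∃ ws₁ ws₂, gs = ws₁ ++ ws₂ ∧ GapsMatch ws₁ Γ₁ ∧ WIndep I [a] ws₁.flatten ∧
      GapsMatch ws₂ Γ₂ ∧ (ws₁ ≠ [] ↔ Γ₁ ≠ []) := by
  obtain ⟨ws₁, ws₂, rfl, h₁, h₂⟩ := hm.exists_of_append_right
  obtain ⟨h₁, hws⟩ := gapsMatch_map_Rexp_iff.mp h₁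
  exact ⟨ws₁, ws₂, rfl, h₁, hws, h₂, by simp [← List.length_eq_zero_iff, h₁.length_eq]⟩

theorem RAntimLN.exists_gapStep {N : ℕ} {a : α} {Γ Γ' : List (RegularExpression α)}
    {gs' : List (List α)} (h : RAntimLN I N Γ a Γ') (hm : GapsMatch gs' Γ') :
    ∃ gs, GapsMatch gs Γ ∧ GapStep I a gs gs' := by
  cases h with
  | split hA _ =>
    obtain ⟨ws₁, _, rfl, h₁, hws, h₂, -⟩ := hm.exists_of_append_map_Rexp
    obtain ⟨wl, _, hl, h₃, rfl⟩ := List.forall₂_cons_right_iff.mp h₂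
    obtain ⟨wr, ws₂, hr, h₄, rfl⟩ := List.forall₂_cons_right_iff.mp h₃
    obtain ⟨hmem, hwl⟩ := hA.append_cons_mem hl hr
    exact ⟨_, List.rel_append h₁ (.cons hmem h₄), .split ws₁ ws₂ wl wr hws hwl⟩
  | dropL hA hEl hne =>
    obtain ⟨ws₁, _, rfl, h₁, hws, h₂, hne₁⟩ := hm.exists_of_append_map_Rexp
    obtain ⟨wr, ws₂, hr, h₃, rfl⟩ := List.forall₂_cons_right_iff.mp h₂
    obtain ⟨hmem, -⟩ := hA.append_cons_mem hEl hr
    exact ⟨_, List.rel_append h₁ (.cons hmem h₃), .dropL ws₁ ws₂ wr hws (hne₁.mpr hne)⟩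
  | dropR hA hEr hne =>
    obtain ⟨ws₁, _, rfl, h₁, hws, h₂, -⟩ := hm.exists_of_append_map_Rexp
    obtain ⟨wl, ws₂, hl, h₃, rfl⟩ := List.forall₂_cons_right_iff.mp h₂
    obtain ⟨hmem, hwl⟩ := hA.append_cons_mem hl hEr
    refine ⟨_, List.rel_append h₁ (.cons hmem h₃), .dropR ws₁ ws₂ wl hws hwl ?_⟩
    simpa [← List.length_eq_zero_iff, h₃.length_eq] using hne
  | dropBoth hA hEl hEr hne₁ hne₂ =>
    obtain ⟨ws₁, ws₂, rfl, h₁, hws, h₂, hne₁'⟩ := hm.exists_of_append_map_Rexp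
    obtain ⟨hmem, -⟩ := hA.append_cons_mem hEl hEr
    refine ⟨_, List.rel_append h₁ (.cons hmem h₂), .dropBoth ws₁ ws₂ hws (hne₁'.mpr hne₁) ?_⟩
    simpa [← List.length_eq_zero_iff, h₂.length_eq] using hne₂

section Runs

variable {N : ℕ} {E : RegularExpression α}

theorem RAntimWN.exists_interleaving [Std.Symm I] {p : List α} {Γ : List (RegularExpression α)}
    (h : RAntimWN I N E p Γ) {gs : List (List α)} (hm : GapsMatch gs Γ) :
    ∃ us z, Interleaving I gs us z ∧ z ∈ E.matches' ∧ TrEq I p us.flatten := by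
  induction h generalizing gs with
  | nil =>
    obtain ⟨z, _, hz, hnil, rfl⟩ := List.forall₂_cons_right_iff.mp hm
    obtain rfl := List.forall₂_nil_right_iff.mp hnil
    exact ⟨[], z, .single z, hz, .refl []⟩
  | snoc _ hstep ih =>
    obtain ⟨gs₀, hm₀, hgap⟩ := hstep.exists_gapStep hm
    obtain ⟨us, z, h, hz, hp⟩ := ih hm₀
    obtain ⟨us', h', hins⟩ := h.exists_of_gapStep hgap
    exact ⟨us', z, h', hz, (hp.append_right _).trans hins.trEq.symm⟩

theorem EqScatEqLe.exists_interleaving {u z v : List α} (h : EqScatEqLe I N u z v) :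
    ∃ gs us, Interleaving I gs us z ∧ InnerNonempty gs ∧ gs.length ≤ N + 1 ∧
      TrEq I us.flatten u ∧ TrEq I gs.flatten v := by
  obtain ⟨u', v', hu, ⟨n, hn, hs⟩, hv⟩ := h
  obtain ⟨gs, us, h, hi, hlen, rfl, rfl⟩ := hs.exists_interleaving
  exact ⟨gs, us, h, hi, by omega, hu.symm, hv⟩

theorem exists_rAntimWN_of_forall_eqScatEqLe [Std.Irrefl I] [Std.Symm I] {w z : List α}
    (hz : z ∈ E.matches') (hall : ∀ p s, w = p ++ s → EqScatEqLe I N p z s) (p : List α) :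
    ∀ s, w = p ++ s → ∃ Γ gs us, RAntimWN I N E p Γ ∧ GapsMatch gs Γ ∧
      Interleaving I gs us z ∧ InnerNonempty gs ∧ TrEq I us.flatten p ∧ TrEq I gs.flatten s := by
  induction p using List.reverseRecOn with
  | nil =>
    intro s hs
    obtain ⟨gs, us, h, hi, -, hu, hv⟩ := (hall [] s (by simp [hs])).exists_interleaving
    obtain rfl : us = [] := h.blocks_eq_nil_iff.mpr hu.eq_nil
    obtain rfl := h.eq_single
    exact ⟨[E], [z], [], .nil E, by simpa using hz, h, hi, .refl [], hv⟩
  | append_singleton p a ih =>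
    intro s hs
    obtain ⟨gs₁, us₁, h₁, hi₁, hlen₁, hu₁, hv₁⟩ := (hall (p ++ [a]) s hs).exists_interleaving
    obtain ⟨x, y, hxy, hy, hp⟩ := hu₁.indepInsert
    obtain ⟨gs₀, us₀, h₀, hflat₀, hgap⟩ := h₁.exists_gapStep hxy hy
    obtain ⟨Γ, gs, us, hrun, hm, h, hi, hu, -⟩ := ih (a :: s) (by simpa using hs)
    obtain ⟨rfl, -⟩ := h.eq_of_perm h₀ hi (hgap.innerNonempty hi₁)
      (hu.perm.trans (hflat₀ ▸ hp.perm.symm))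
    obtain ⟨Γ', hΓ', hm'⟩ := RAntimLN.exists_of_gapStep hm hgap hlen₁
    exact ⟨Γ', gs₁, us₁, hrun.snoc hΓ', hm', h₁, hi₁, hu₁, hv₁⟩

end Runs

end

theorem stmt19_general {α : Type u} (I : α → α → Prop)
    (hirr : Irreflexive I) (hsym : Symmetric I) (E : RegularExpression α) (N : ℕ)
    (hrank : HasUniformRankLe I E.matches' N) (u : List α) :
    u ∈ TrClosure I E.matches' ↔
      (u = [] ∧ [] ∈ E.matches') ∨
      (u ≠ [] ∧ ∃ E0 E1, RAntimWN I N E u [E0, E1] ∧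
        [] ∈ E0.matches' ∧ [] ∈ E1.matches') := by
  have : Std.Irrefl I := ⟨hirr⟩
  have : Std.Symm I := ⟨hsym⟩
  constructor
  · intro hu
    rcases eq_or_ne u [] with rfl | hne
    · obtain ⟨z, hz, hz₀⟩ := hu
      exact .inl ⟨rfl, hz₀.symm.eq_nil ▸ hz⟩
    obtain ⟨z, hz, hall⟩ := hrank u hu
    obtain ⟨Γ, gs, us, hrun, hm, h, hi, hus, hgs⟩ :=
      exists_rAntimWN_of_forall_eqScatEqLe hz hall u [] (by simp)
    have hus_ne : us ≠ [] := by rintro rfl; exact hne hus.symm.eq_nil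
    obtain rfl := h.gaps_eq_nil_nil hi hus_ne hgs.eq_nil
    obtain ⟨E0, E1, h0, h1, rfl⟩ : ∃ E0 E1, [] ∈ E0.matches' ∧ [] ∈ E1.matches' ∧ Γ = [E0, E1] := by
      simpa [GapsMatch, List.forall₂_cons_left_iff] using hm
    exact .inr ⟨hne, E0, E1, hrun, h0, h1⟩
  · rintro (⟨rfl, hE⟩ | ⟨-, E0, E1, hrun, h0, h1⟩)
    · exact ⟨[], hE, .refl []⟩
    · obtain ⟨us, z, h, hz, hp⟩ :=
        hrun.exists_interleaving (gs := [[], []]) (.cons h0 (.cons h1 .nil))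
      exact ⟨z, hz, by simpa [h.eq_singleton_of_gaps_nil_nil] using hp⟩

/-- the N-truncated refined Antimirov automaton accepts the trace closure
when ⟦E⟧ has uniform rank at most N. -/
theorem stmt19 {α : Type u} [Fintype α] (I : α → α → Prop)
    (hirr : Irreflexive I) (hsym : Symmetric I) (E : RegularExpression α) (N : ℕ)
    (hrank : HasUniformRankLe I E.matches' N) (u : List α) :
    u ∈ TrClosure I E.matches' ↔
      (u = [] ∧ [] ∈ E.matches') ∨
      (u ≠ [] ∧ ∃ E0 E1, RAntimWN I N E u [E0, E1] ∧
        [] ∈ E0.matches' ∧ [] ∈ E1.matches') :=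
  stmt19_general I hirr hsym E N hrank u
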